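/- Every total order on a finite set that is compatible with (i.e., extends) a given partial order can be reached: for any finite partially ordered set (X, P) there exists a linear order R on X with P ⊆ R, and moreover any two linear extensions of P are connected by a sequence of transpositions of adjacent elements that are incomparable in P. -/

import Mathlib

/-! A linear extension exists by Szpilrajn's theorem (`extend_partialOrder`). For connectivity,
induct on the number of inversions of two linear extensions `s₁`, `s₂`, the pairs they order
oppositely. If there is an inversion, an inversion `(a, b)` with the fewest elements strictly
between `a` and `b` in `s₁` is adjacent in `s₁`: for any `c` in between, `(a, c)` or `(c, b)`
would be an inversion with fewer. Its elements are incomparable in `P`, since `s₁` and `s₂` both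
extend `P`, and swapping them in `s₁` yields a linear extension with fewer inversions. -/

/-- Two relations `s, s'` differ by a transposition of two elements that are adjacent
in the linear order `s` and incomparable in the partial order `P`. -/
def IsAdjSwap {X : Type*} [DecidableEq X] (P : X → X → Prop) (s s' : X → X → Prop) : Prop :=
  ∃ a b : X, a ≠ b ∧ ¬ P a b ∧ ¬ P b a ∧ s a b ∧
    (¬ ∃ c, c ≠ a ∧ c ≠ b ∧ s a c ∧ s c b) ∧
    ∀ x y, s' x y ↔ s (Equiv.swap a b x) (Equiv.swap a b y)

section LinearExtension

variable {X : Type*} {s s₁ s₂ : X → X → Prop}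

def inversions (s₁ s₂ : X → X → Prop) : Set (X × X) :=
  {p | p.1 ≠ p.2 ∧ s₁ p.1 p.2 ∧ s₂ p.2 p.1}

def strictlyBetween (s : X → X → Prop) (a b : X) : Set X :=
  {c | c ≠ a ∧ c ≠ b ∧ s a c ∧ s c b}

theorem eq_of_inversions_eq_empty [IsLinearOrder X s₁] [IsLinearOrder X s₂]
    (h : inversions s₁ s₂ = ∅) : s₁ = s₂ := by
  have hle : ∀ u v, s₁ u v → s₂ u v := fun u v huv ↦ by
    by_contra hn
    have hne : u ≠ v := by rintro rfl; exact hn (refl_of s₂ u)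
    exact Set.eq_empty_iff_forall_notMem.mp h (u, v)
      ⟨hne, huv, (total_of s₂ u v).resolve_left hn⟩
  funext u v
  refine propext ⟨hle u v, fun huv ↦ ?_⟩
  by_contra hn
  have hvu := hle v u ((total_of s₁ u v).resolve_left hn)
  exact hn (antisymm_of s₂ huv hvu ▸ refl_of s₁ u)

section Between

variable [IsPartialOrder X s] {a b c : X}

theorem strictlyBetween_ssubset_left (hc : c ∈ strictlyBetween s a b) :
    strictlyBetween s a c ⊂ strictlyBetween s a b := by
  obtain ⟨hca, hcb, hac, hcb'⟩ := hc
  refine (Set.ssubset_iff_of_subset ?_).mpr ⟨c, ⟨hca, hcb, hac, hcb'⟩, fun h ↦ h.2.1 rfl⟩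
  rintro d ⟨hda, hdc, had, hdc'⟩
  refine ⟨hda, ?_, had, trans_of s hdc' hcb'⟩
  rintro rfl
  exact hcb (antisymm_of s hcb' hdc')

theorem strictlyBetween_ssubset_right (hc : c ∈ strictlyBetween s a b) :
    strictlyBetween s c b ⊂ strictlyBetween s a b := by
  obtain ⟨hca, hcb, hac, hcb'⟩ := hc
  refine (Set.ssubset_iff_of_subset ?_).mpr ⟨c, ⟨hca, hcb, hac, hcb'⟩, fun h ↦ h.1 rfl⟩
  rintro d ⟨hdc, hdb, hcd, hdb'⟩
  refine ⟨?_, hdb, trans_of s hac hcd, hdb'⟩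
  rintro rfl
  exact hca (antisymm_of s hcd hac)

end Between

theorem exists_inversion_strictlyBetween_eq_empty [Finite X] [IsPartialOrder X s₁]
    [IsTrans X s₂] [Std.Total s₂] (h : (inversions s₁ s₂).Nonempty) :
    ∃ a b, (a, b) ∈ inversions s₁ s₂ ∧ strictlyBetween s₁ a b = ∅ := by
  obtain ⟨⟨a, b⟩, hab, hmin⟩ := Set.exists_min_image _
    (fun p ↦ (strictlyBetween s₁ p.1 p.2).ncard) (Set.toFinite _) h
  refine ⟨a, b, hab, Set.eq_empty_of_forall_notMem fun c hc ↦ ?_⟩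
  obtain ⟨-, -, hba⟩ := hab
  rcases total_of s₂ a c with hac | hca
  · exact (Set.ncard_lt_ncard (strictlyBetween_ssubset_right hc)).not_ge
      (hmin (c, b) ⟨hc.2.1, hc.2.2.2, trans_of s₂ hba hac⟩)
  · exact (Set.ncard_lt_ncard (strictlyBetween_ssubset_left hc)).not_ge
      (hmin (a, c) ⟨hc.1.symm, hc.2.2.1, hca⟩)

section Swap

variable [IsLinearOrder X s] [DecidableEq X] {a b : X}

theorem swap_iff_of_strictlyBetween_eq_empty (hab : s a b) (hadj : strictlyBetween s a b = ∅)
    (u v : X) (h₁ : (u, v) ≠ (a, b)) (h₂ : (u, v) ≠ (b, a)) :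
    s (Equiv.swap a b u) (Equiv.swap a b v) ↔ s u v := by
  have hnotBetween (w) (hwa : w ≠ a) (hwb : w ≠ b) : ¬ (s a w ∧ s w b) := fun h ↦
    Set.eq_empty_iff_forall_notMem.mp hadj w ⟨hwa, hwb, h⟩
  -- adjacency makes `a` and `b` compare in the same way with every other element
  have hleft (w) (hwa : w ≠ a) (hwb : w ≠ b) : s a w ↔ s b w :=
    ⟨fun h ↦ (total_of s b w).resolve_right fun h' ↦ hnotBetween w hwa hwb ⟨h, h'⟩,
      trans_of s hab⟩
  have hright (w) (hwa : w ≠ a) (hwb : w ≠ b) : s w a ↔ s w b :=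
    ⟨(trans_of s · hab),
      fun h ↦ (total_of s w a).resolve_right fun h' ↦ hnotBetween w hwa hwb ⟨h', h⟩⟩
  have := refl_of s a
  have := refl_of s b
  grind

end Swap

theorem exists_isAdjSwap_inversions_ssubset [Finite X] [DecidableEq X] {P : X → X → Prop}
    [IsLinearOrder X s₁] [IsLinearOrder X s₂] (hP₁ : ∀ a b, P a b → s₁ a b)
    (hP₂ : ∀ a b, P a b → s₂ a b) (h : (inversions s₁ s₂).Nonempty) :
    ∃ s, IsLinearOrder X s ∧ (∀ a b, P a b → s a b) ∧ IsAdjSwap P s₁ s ∧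
      inversions s s₂ ⊂ inversions s₁ s₂ := by
  obtain ⟨a, b, ⟨hne, hab, hba⟩, hadj⟩ := exists_inversion_strictlyBetween_eq_empty h
  have hswap := swap_iff_of_strictlyBetween_eq_empty hab hadj
  have hPab : ¬ P a b := fun h ↦ hne (antisymm_of s₂ (hP₂ a b h) hba)
  have hPba : ¬ P b a := fun h ↦ hne (antisymm_of s₁ hab (hP₁ b a h))
  refine ⟨Function.onFun s₁ (Equiv.swap a b),
    (Equiv.swap a b).injective.isLinearOrder_onFun s₁, ?_,
    ⟨a, b, hne, hPab, hPba, hab, fun ⟨c, hc⟩ ↦ hadj.subset hc, fun _ _ ↦ Iff.rfl⟩, ?_⟩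
  · intro u v huv
    refine (hswap u v ?_ ?_).mpr (hP₁ u v huv) <;> rintro ⟨rfl, rfl⟩ <;> contradiction
  · refine (Set.ssubset_iff_of_subset ?_).mpr ⟨(a, b), ⟨hne, hab, hba⟩, ?_⟩
    · rintro ⟨u, v⟩ ⟨huv, hs, hvu⟩
      refine ⟨huv, (hswap u v ?_ ?_).mp hs, hvu⟩ <;> rintro ⟨rfl, rfl⟩
      · exact hne (antisymm_of s₁ hab (by simpa [Function.onFun] using hs))
      · exact hne (antisymm_of s₂ hvu hba)
    · rintro ⟨-, hs, -⟩
      exact hne (antisymm_of s₁ hab (by simpa [Function.onFun] using hs))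

theorem reflTransGen_isAdjSwap_of_extends [Finite X] [DecidableEq X] {P : X → X → Prop}
    [IsLinearOrder X s₁] [IsLinearOrder X s₂] (hP₁ : ∀ a b, P a b → s₁ a b)
    (hP₂ : ∀ a b, P a b → s₂ a b) : Relation.ReflTransGen (IsAdjSwap P) s₁ s₂ := by
  induction hn : (inversions s₁ s₂).ncard using Nat.strong_induction_on generalizing s₁ with
  | _ n ih =>
  obtain h | h := (inversions s₁ s₂).eq_empty_or_nonempty
  · rw [eq_of_inversions_eq_empty h]
  · obtain ⟨s, hs, hP, hstep, hlt⟩ := exists_isAdjSwap_inversions_ssubset hP₁ hP₂ h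
    exact .head hstep (ih _ (hn ▸ Set.ncard_lt_ncard hlt) hP rfl)

end LinearExtension

/-- Every finite partial order admits a linear extension, and any two linear
extensions are connected by a sequence of transpositions of adjacent elements
that are incomparable in the partial order. -/
theorem stmt_11 (X : Type*) [Fintype X] [DecidableEq X] (P : X → X → Prop) [IsPartialOrder X P] :
    (∃ s : X → X → Prop, IsLinearOrder X s ∧ ∀ a b, P a b → s a b) ∧
    ∀ s₁ s₂ : X → X → Prop,
      IsLinearOrder X s₁ → (∀ a b, P a b → s₁ a b) →
      IsLinearOrder X s₂ → (∀ a b, P a b → s₂ a b) →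
      Relation.ReflTransGen (IsAdjSwap P) s₁ s₂ :=
  ⟨extend_partialOrder P,
    fun _ _ _ hP₁ _ hP₂ ↦ reflTransGen_isAdjSwap_of_extends hP₁ hP₂⟩
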